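/- arXiv:1209.6498 — 2 statements merged into one kernel-verified Lean document; each statement's English description precedes it below -/
import Mathlib

section
/- (Pólya–Vinogradov inequality) For any integer n > 1, any non-principal Dirichlet character χ modulo n, and any positive integer h, |∑_{k=1}^{h} χ(k)| ≤ 2√n · log n. -/
/-!
For a primitive character `χ` modulo `m`, Fourier inversion on `ZMod m` gives
`χ k = τ(χ) / m * ∑ₐ χ⁻¹(-a) e(ak/m)` with `|τ(χ)| = √m`. Summing the geometric series in `k`,
`|∑_{k ≤ h} e(ak/m)| ≤ m / (2|a|)` for `a` represented in `(-m/2, m/2]`, so the partial sums of `χ`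
are at most `√m · H(⌊m/2⌋) ≤ √m log (2m)`. A non-principal `χ` modulo `n` is induced from a
primitive character `χ*` of conductor `m ≥ 2`; Möbius inversion over the divisors of `n / m`
removes the coprimality condition, `∑_{k ≤ h} χ k = ∑_{d ∣ n/m} μ(d) χ*(d) ∑_{j ≤ h/d} χ*(j)`,
and there are at most `2 √(n/m)` such `d`.
-/

open Finset ArithmeticFunction DirichletCharacter ZMod
open scoped ArithmeticFunction.Moebius

lemma norm_sum_Icc_pow_le {𝕜 : Type*} [NormedDivisionRing 𝕜] {z : 𝕜} (hz1 : ‖z‖ ≤ 1) (hz : z ≠ 1)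
    (h : ℕ) : ‖∑ k ∈ Icc 1 h, z ^ k‖ ≤ 2 / ‖z - 1‖ := by
  rw [← Ico_add_one_right_eq_Icc, geom_sum_Ico hz (by omega), norm_div]
  gcongr
  calc ‖z ^ (h + 1) - z ^ 1‖ ≤ ‖z‖ ^ (h + 1) + ‖z‖ ^ 1 := by
        rw [← norm_pow, ← norm_pow]; exact norm_sub_le _ _
    _ ≤ 1 + 1 := by gcongr <;> exact pow_le_one₀ (norm_nonneg z) hz1
    _ = 2 := one_add_one_eq_two

lemma harmonic_div_two_le_log_two_mul {N : ℕ} (hN : 2 ≤ N) :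
    (harmonic (N / 2) : ℝ) ≤ Real.log (2 * N) := by
  have hM : (1 : ℝ) ≤ (N / 2 : ℕ) := by exact_mod_cast (by omega : 1 ≤ N / 2)
  have h4 : 1 ≤ Real.log 4 := by
    rw [show (4 : ℝ) = 2 ^ 2 by norm_num, Real.log_pow]
    push_cast
    linarith [Real.log_two_gt_d9]
  calc (harmonic (N / 2) : ℝ) ≤ 1 + Real.log (N / 2 : ℕ) := harmonic_le_one_add_log _
    _ ≤ Real.log 4 + Real.log (N / 2 : ℕ) := by linarith
    _ = Real.log (4 * (N / 2 : ℕ)) := (Real.log_mul (by norm_num) (by positivity)).symm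
    _ ≤ Real.log (2 * N) :=
        Real.log_le_log (by positivity) (by exact_mod_cast (by omega : 4 * (N / 2) ≤ 2 * N))

lemma Nat.card_divisors_le_two_mul_sqrt (q : ℕ) : (#q.divisors : ℝ) ≤ 2 * √q := by
  classical
  rcases eq_or_ne q 0 with rfl | hq
  · simp
  set A := {d ∈ Icc 1 q.sqrt | d ∣ q}
  -- a divisor above `√q` is paired with its complementary divisor below `√q`
  have hcover : q.divisors ⊆ A ∪ A.image (q / ·) := by
    intro d hd
    obtain ⟨hdq, -⟩ := Nat.mem_divisors.mp hd
    have hd0 : 0 < d := Nat.pos_of_mem_divisors hd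
    rcases le_or_gt d q.sqrt with hds | hds
    · exact mem_union_left _ (mem_filter.mpr ⟨mem_Icc.mpr ⟨hd0, hds⟩, hdq⟩)
    · refine mem_union_right _ (mem_image.mpr ⟨q / d, mem_filter.mpr ⟨mem_Icc.mpr ⟨?_, ?_⟩,
        Nat.div_dvd_of_dvd hdq⟩, Nat.div_div_self hdq hq⟩)
      · exact Nat.div_pos (Nat.le_of_dvd (Nat.pos_of_ne_zero hq) hdq) hd0
      · refine Nat.lt_succ_iff.mp ((Nat.div_lt_iff_lt_mul hd0).mpr ?_)
        calc q < (q.sqrt + 1) * (q.sqrt + 1) := Nat.lt_succ_sqrt q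
          _ ≤ (q.sqrt + 1) * d := Nat.mul_le_mul_left _ hds
  have hA : #A ≤ q.sqrt := (card_filter_le _ _).trans (by simp)
  have hcard : #q.divisors ≤ 2 * q.sqrt :=
    calc #q.divisors ≤ #A + #(A.image (q / ·)) := (card_le_card hcover).trans (card_union_le _ _)
      _ ≤ #A + #A := Nat.add_le_add_left Finset.card_image_le _
      _ ≤ 2 * q.sqrt := by omega
  calc (#q.divisors : ℝ) ≤ 2 * (q.sqrt : ℝ) := by exact_mod_cast hcard
    _ ≤ 2 * √q := by gcongr; exact Real.nat_sqrt_le_real_sqrt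

lemma sum_moebius_divisors_filter_dvd {R : Type*} [Ring R] {q : ℕ} (hq : q ≠ 0) (k : ℕ) :
    ∑ d ∈ q.divisors with d ∣ k, (μ d : R) = if k.Coprime q then 1 else 0 := by
  have hdiv : {d ∈ q.divisors | d ∣ k} = (q.gcd k).divisors := by
    ext d
    simp [Nat.dvd_gcd_iff, hq]
  have hμζ := congrArg (· (q.gcd k)) (coe_moebius_mul_coe_zeta (R := R))
  simp only [coe_mul_zeta_apply, intCoe_apply, one_apply] at hμζ
  rw [hdiv, hμζ]
  exact if_congr Nat.coprime_comm rfl rfl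

lemma sum_Icc_filter_dvd {M : Type*} [AddCommMonoid M] (f : ℕ → M) {d : ℕ} (hd : 0 < d) (h : ℕ) :
    ∑ k ∈ Icc 1 h with d ∣ k, f k = ∑ j ∈ Icc 1 (h / d), f (d * j) := by
  have himage : {k ∈ Icc 1 h | d ∣ k} = (Icc 1 (h / d)).image (d * ·) := by
    ext k
    simp only [mem_filter, mem_Icc, mem_image]
    constructor
    · rintro ⟨⟨hk1, hkh⟩, j, rfl⟩
      exact ⟨j, ⟨Nat.pos_of_mul_pos_left hk1, (Nat.le_div_iff_mul_le hd).mpr (by linarith)⟩, rfl⟩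
    · rintro ⟨j, ⟨hj1, hjh⟩, rfl⟩
      exact ⟨⟨Nat.mul_pos hd hj1, by nlinarith [Nat.div_mul_le_self h d]⟩, dvd_mul_right d j⟩
  rw [himage, sum_image fun x _ y _ hxy ↦ Nat.eq_of_mul_eq_mul_left hd hxy]

namespace ZMod

variable {N : ℕ} [NeZero N]

lemma four_mul_natAbs_valMinAbs_div_le_norm_stdAddChar_sub_one (a : ZMod N) :
    4 * a.valMinAbs.natAbs / (N : ℝ) ≤ ‖stdAddChar a - 1‖ := by
  have hN : (0 : ℝ) < N := Nat.cast_pos.mpr (Nat.pos_of_neZero N)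
  have hhalf : (a.valMinAbs.natAbs : ℝ) * 2 ≤ N := by
    have := a.natAbs_valMinAbs_le
    exact_mod_cast (by omega : a.valMinAbs.natAbs * 2 ≤ N)
  set x := Real.pi * a.valMinAbs / N
  have hx_abs : |x| = Real.pi * a.valMinAbs.natAbs / N := by
    rw [abs_div, abs_mul, abs_of_pos Real.pi_pos, abs_of_pos hN, Nat.cast_natAbs, Int.cast_abs]
  have hx : |x| ≤ Real.pi / 2 := by
    rw [hx_abs, div_le_iff₀ hN]
    nlinarith [Real.pi_pos]
  calc 4 * a.valMinAbs.natAbs / (N : ℝ) = 2 * (2 / Real.pi * |x|) := by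
        rw [hx_abs]
        field_simp
        ring
    _ ≤ 2 * |Real.sin x| := by gcongr; exact Real.mul_abs_le_abs_sin hx
    _ = ‖stdAddChar a - 1‖ := by
        rw [← a.coe_valMinAbs, stdAddChar_coe,
          show 2 * (Real.pi : ℂ) * Complex.I * a.valMinAbs / N = Complex.I * (2 * x : ℝ) by
            push_cast [x]; ring,
          Complex.norm_exp_I_mul_ofReal_sub_one, mul_div_cancel_left₀ _ two_ne_zero,
          norm_mul, Real.norm_eq_abs, Real.norm_eq_abs, abs_two]

lemma norm_sum_Icc_stdAddChar_mul_le {a : ZMod N} (ha : a ≠ 0) (h : ℕ) :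
    ‖∑ k ∈ Icc 1 h, stdAddChar (a * (k : ZMod N))‖ ≤ N / (2 * a.valMinAbs.natAbs) := by
  have hN : (0 : ℝ) < N := Nat.cast_pos.mpr (Nat.pos_of_neZero N)
  have hv : (0 : ℝ) < a.valMinAbs.natAbs := by
    simpa [Int.natAbs_pos, valMinAbs_eq_zero] using ha
  have hz : stdAddChar a ≠ 1 := fun h1 ↦
    ha (injective_stdAddChar (h1.trans (AddChar.map_zero_eq_one _).symm))
  calc ‖∑ k ∈ Icc 1 h, stdAddChar (a * (k : ZMod N))‖ = ‖∑ k ∈ Icc 1 h, stdAddChar a ^ k‖ := by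
        simp_rw [← AddChar.map_nsmul_eq_pow, nsmul_eq_mul, mul_comm]
    _ ≤ 2 / ‖stdAddChar a - 1‖ :=
        norm_sum_Icc_pow_le (by simp [stdAddChar_apply, Circle.norm_coe]) hz h
    _ ≤ 2 / (4 * a.valMinAbs.natAbs / (N : ℝ)) :=
        div_le_div_of_nonneg_left zero_le_two (div_pos (by linarith) hN)
          (four_mul_natAbs_valMinAbs_div_le_norm_stdAddChar_sub_one a)
    _ = N / (2 * a.valMinAbs.natAbs) := by
        field_simp
        ring

lemma card_filter_natAbs_valMinAbs_eq_le (t : ℕ) :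
    #{a : ZMod N | a.valMinAbs.natAbs = t} ≤ 2 := by
  classical
  by_cases ht : ∃ b : ZMod N, b.valMinAbs.natAbs = t
  · obtain ⟨b, rfl⟩ := ht
    calc #{a : ZMod N | a.valMinAbs.natAbs = b.valMinAbs.natAbs} ≤ #{b, -b} := by
          refine card_le_card fun a ha ↦ ?_
          simpa [natAbs_valMinAbs_eq_natAbs_valMinAbs] using ha
      _ ≤ 2 := card_le_two
  · simp only [not_exists] at ht
    simp [ht]

lemma sum_inv_natAbs_valMinAbs_le :
    ∑ a ∈ univ.erase (0 : ZMod N), (a.valMinAbs.natAbs : ℝ)⁻¹ ≤ 2 * harmonic (N / 2) := by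
  classical
  have hmaps : ∀ a ∈ univ.erase (0 : ZMod N), a.valMinAbs.natAbs ∈ Icc 1 (N / 2) := fun a ha ↦
    mem_Icc.mpr ⟨Int.natAbs_pos.mpr ((valMinAbs_eq_zero a).not.mpr (ne_of_mem_erase ha)),
      a.natAbs_valMinAbs_le⟩
  rw [← sum_fiberwise_of_maps_to hmaps, harmonic_eq_sum_Icc]
  push_cast
  rw [mul_sum]
  refine sum_le_sum fun t _ ↦ ?_
  calc ∑ a ∈ univ.erase (0 : ZMod N) with a.valMinAbs.natAbs = t, (a.valMinAbs.natAbs : ℝ)⁻¹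
      = #{a ∈ univ.erase (0 : ZMod N) | a.valMinAbs.natAbs = t} * (t : ℝ)⁻¹ := by
        rw [← nsmul_eq_mul, ← sum_const]
        exact sum_congr rfl fun a ha ↦ by rw [(mem_filter.mp ha).2]
    _ ≤ 2 * (t : ℝ)⁻¹ := by
        gcongr
        exact_mod_cast (card_le_card (filter_subset_filter _ (erase_subset _ _))).trans
          (card_filter_natAbs_valMinAbs_eq_le t)

end ZMod

namespace DirichletCharacter

section Primitive

variable {N : ℕ} [NeZero N] {χ : DirichletCharacter ℂ N}

lemma star_gaussSum_stdAddChar (χ : DirichletCharacter ℂ N) :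
    star (gaussSum χ stdAddChar) = ∑ j, χ⁻¹ (-j) * stdAddChar j := by
  rw [star_gaussSum_eq, gaussSum]
  exact Fintype.sum_equiv (Equiv.neg _) _ _ fun j ↦ by simp [AddChar.inv_apply]

lemma IsPrimitive.norm_gaussSum_stdAddChar (hχ : χ.IsPrimitive) :
    ‖gaussSum χ stdAddChar‖ = √N := by
  -- Fourier inversion `𝓕 (𝓕 χ) (-1) = N χ 1`, with `𝓕 χ = χ⁻¹ (-·) * gaussSum χ stdAddChar`.
  have hinv := congrFun (dft_dft (χ : ZMod N → ℂ)) (-1)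
  simp only [dft_apply, hχ.fourierTransform_eq_inv_mul_gaussSum, smul_eq_mul, neg_neg,
    map_one, mul_neg_one, mul_one] at hinv
  have hmul : gaussSum χ stdAddChar * star (gaussSum χ stdAddChar) = N := by
    rw [star_gaussSum_stdAddChar, ← hinv, mul_sum]
    exact sum_congr rfl fun j _ ↦ by ring
  rw [Complex.star_def, Complex.mul_conj, ← Complex.ofReal_natCast, Complex.ofReal_inj] at hmul
  rw [Complex.norm_def, hmul]

lemma IsPrimitive.sum_eq_inv_mul_sum_gaussSum (hχ : χ.IsPrimitive) (s : Finset ℕ) :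
    ∑ k ∈ s, χ k = (N : ℂ)⁻¹ *
      ∑ a, χ⁻¹ (-a) * gaussSum χ stdAddChar * ∑ k ∈ s, stdAddChar (a * (k : ZMod N)) := by
  have hχk (k : ZMod N) : χ k = (N : ℂ)⁻¹ *
      ∑ a, stdAddChar (a * k) * (χ⁻¹ (-a) * gaussSum χ stdAddChar) := by
    conv_lhs => rw [← dft.symm_apply_apply (χ : ZMod N → ℂ)]
    simp only [invDFT_apply, smul_eq_mul, hχ.fourierTransform_eq_inv_mul_gaussSum]
  simp_rw [hχk]
  rw [← mul_sum, sum_comm]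
  refine congrArg _ (sum_congr rfl fun a _ ↦ ?_)
  rw [mul_sum]
  exact sum_congr rfl fun k _ ↦ mul_comm _ _

lemma IsPrimitive.norm_sum_Icc_le (hχ : χ.IsPrimitive) (hN : 1 < N) (h : ℕ) :
    ‖∑ k ∈ Icc 1 h, χ k‖ ≤ √N * Real.log (2 * N) := by
  have : Nontrivial (ZMod N) := ZMod.nontrivial_iff.mpr hN.ne'
  have hterm (a : ZMod N) (ha : a ≠ 0) :
      ‖χ⁻¹ (-a) * gaussSum χ stdAddChar * ∑ k ∈ Icc 1 h, stdAddChar (a * (k : ZMod N))‖ ≤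
        √N * (N / 2) * (a.valMinAbs.natAbs : ℝ)⁻¹ := by
    rw [norm_mul, norm_mul, hχ.norm_gaussSum_stdAddChar]
    calc ‖χ⁻¹ (-a)‖ * √N * ‖∑ k ∈ Icc 1 h, stdAddChar (a * (k : ZMod N))‖
        ≤ 1 * √N * (N / (2 * a.valMinAbs.natAbs)) := by
          gcongr
          · exact norm_le_one _ _
          · exact norm_sum_Icc_stdAddChar_mul_le ha h
      _ = √N * (N / 2) * (a.valMinAbs.natAbs : ℝ)⁻¹ := by ring
  rw [hχ.sum_eq_inv_mul_sum_gaussSum,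
    ← sum_erase _ (a := 0) (by rw [neg_zero, MulChar.map_zero, zero_mul, zero_mul]),
    norm_mul, norm_inv, Complex.norm_natCast]
  calc (N : ℝ)⁻¹ * ‖∑ a ∈ univ.erase 0, χ⁻¹ (-a) * gaussSum χ stdAddChar *
        ∑ k ∈ Icc 1 h, stdAddChar (a * (k : ZMod N))‖
      ≤ (N : ℝ)⁻¹ * ∑ a ∈ univ.erase (0 : ZMod N), √N * (N / 2) * (a.valMinAbs.natAbs : ℝ)⁻¹ := by
        gcongr
        exact norm_sum_le_of_le _ fun a ha ↦ hterm a (ne_of_mem_erase ha)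
    _ = √N / 2 * ∑ a ∈ univ.erase (0 : ZMod N), (a.valMinAbs.natAbs : ℝ)⁻¹ := by
        rw [← mul_sum]
        field_simp
    _ ≤ √N / 2 * (2 * harmonic (N / 2)) := by
        gcongr
        exact sum_inv_natAbs_valMinAbs_le
    _ = √N * harmonic (N / 2) := by ring
    _ ≤ √N * Real.log (2 * N) := by
        gcongr
        exact harmonic_div_two_le_log_two_mul hN

end Primitive

variable {R : Type*} [CommRing R] {m n : ℕ}

lemma one_lt_conductor [NeZero n] {χ : DirichletCharacter R n} (hχ : χ ≠ 1) :
    1 < χ.conductor := by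
  have : χ.conductor ≠ 1 := fun h1 ↦ hχ (eq_one_iff_conductor_eq_one.mpr h1)
  have := χ.conductor_ne_zero
  omega

lemma changeLevel_natCast (hmn : m ∣ n) (ψ : DirichletCharacter R m) (k : ℕ) :
    changeLevel hmn ψ k = if k.Coprime (n / m) then ψ k else 0 := by
  have hn' : n = m * (n / m) := (Nat.mul_div_cancel' hmn).symm
  by_cases hkn : k.Coprime n
  · have hu : IsUnit (k : ZMod n) := (ZMod.isUnit_iff_coprime k n).mpr hkn
    rw [if_pos (hkn.coprime_dvd_right (Nat.div_dvd_of_dvd hmn)), ← hu.unit_spec,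
      changeLevel_eq_cast_of_dvd ψ hmn hu.unit, hu.unit_spec, ZMod.cast_natCast hmn]
  · rw [(changeLevel hmn ψ).map_nonunit (mt (ZMod.isUnit_iff_coprime k n).mp hkn)]
    split_ifs with hkq
    · refine (ψ.map_nonunit fun hu ↦ hkn ?_).symm
      rw [hn']
      exact Nat.Coprime.mul_right ((ZMod.isUnit_iff_coprime k m).mp hu) hkq
    · rfl

lemma sum_Icc_changeLevel (hmn : m ∣ n) (hn : n ≠ 0) (ψ : DirichletCharacter R m) (h : ℕ) :
    ∑ k ∈ Icc 1 h, changeLevel hmn ψ k =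
      ∑ d ∈ (n / m).divisors, μ d * ψ d * ∑ j ∈ Icc 1 (h / d), ψ j := by
  have hq : n / m ≠ 0 := (Nat.div_pos (Nat.le_of_dvd (Nat.pos_of_ne_zero hn) hmn)
    (Nat.pos_of_dvd_of_pos hmn (Nat.pos_of_ne_zero hn))).ne'
  calc ∑ k ∈ Icc 1 h, changeLevel hmn ψ k
      = ∑ k ∈ Icc 1 h, ∑ d ∈ (n / m).divisors with d ∣ k, (μ d : R) * ψ k := by
        refine sum_congr rfl fun k _ ↦ ?_
        rw [← sum_mul, sum_moebius_divisors_filter_dvd hq, changeLevel_natCast hmn, ite_mul,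
          one_mul, zero_mul]
    _ = ∑ d ∈ (n / m).divisors, ∑ k ∈ Icc 1 h with d ∣ k, (μ d : R) * ψ k := by
        simp_rw [sum_filter]
        exact sum_comm
    _ = ∑ d ∈ (n / m).divisors, μ d * ψ d * ∑ j ∈ Icc 1 (h / d), ψ j := by
        refine sum_congr rfl fun d hd ↦ ?_
        rw [sum_Icc_filter_dvd _ (Nat.pos_of_mem_divisors hd), mul_sum]
        exact sum_congr rfl fun j _ ↦ by push_cast; rw [map_mul]; ring

end DirichletCharacter

lemma card_divisors_div_mul_le {m n : ℕ} (hmn : m ∣ n) (hm : 2 ≤ m) (hn : n ≠ 0) :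
    #(n / m).divisors * (√m * Real.log (2 * m)) ≤ 2 * √n * Real.log n := by
  obtain ⟨q, rfl⟩ := hmn
  have hq : q ≠ 0 := right_ne_zero_of_mul hn
  have hm' : (2 : ℝ) ≤ m := by exact_mod_cast hm
  rw [Nat.mul_div_cancel_left q (by omega)]
  rcases Nat.lt_or_ge q 2 with hq1 | hq2
  · obtain rfl : q = 1 := by omega
    have hlog : Real.log (2 * m) ≤ 2 * Real.log m := by
      rw [← Real.log_rpow (by positivity)]
      exact Real.log_le_log (by positivity) (by norm_num; nlinarith)
    simp only [Nat.divisors_one, card_singleton, Nat.cast_one, mul_one, one_mul]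
    nlinarith [Real.sqrt_nonneg m]
  · have hq' : (2 : ℝ) ≤ q := by exact_mod_cast hq2
    have hlog : Real.log (2 * m) ≤ Real.log (m * q : ℕ) :=
      Real.log_le_log (by positivity) (by push_cast; nlinarith)
    calc #q.divisors * (√m * Real.log (2 * m)) ≤ 2 * √q * (√m * Real.log (m * q : ℕ)) := by
          gcongr
          · exact mul_nonneg (Real.sqrt_nonneg _) (Real.log_nonneg (by linarith))
          · exact Nat.card_divisors_le_two_mul_sqrt q
      _ = 2 * √(m * q : ℕ) * Real.log (m * q : ℕ) := by
          rw [Nat.cast_mul, Real.sqrt_mul (Nat.cast_nonneg m)]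
          ring

theorem polya_vinogradov_general (n : ℕ) (hn : 1 < n) (χ : DirichletCharacter ℂ n) (hχ : χ ≠ 1)
    (h : ℕ) :
    ‖∑ k ∈ Finset.Icc 1 h, χ (k : ZMod n)‖ ≤
      2 * Real.sqrt n * Real.log n := by
  have : NeZero n := ⟨by omega⟩
  have hm := one_lt_conductor hχ
  set m := χ.conductor
  have : NeZero m := ⟨by omega⟩
  have hterm (d : ℕ) : ‖(μ d : ℂ) * χ.primitiveCharacter d *
      ∑ j ∈ Icc 1 (h / d), χ.primitiveCharacter j‖ ≤ √m * Real.log (2 * m) := by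
    rw [norm_mul, norm_mul]
    calc ‖(μ d : ℂ)‖ * ‖χ.primitiveCharacter d‖ * ‖∑ j ∈ Icc 1 (h / d), χ.primitiveCharacter j‖
        ≤ 1 * 1 * (√m * Real.log (2 * m)) := by
          gcongr
          · exact_mod_cast abs_moebius_le_one
          · exact norm_le_one _ _
          · exact χ.primitiveCharacter_isPrimitive.norm_sum_Icc_le hm _
      _ = √m * Real.log (2 * m) := by rw [one_mul, one_mul]
  have hsum := sum_Icc_changeLevel χ.conductor_dvd_level (by omega) χ.primitiveCharacter h
  rw [changeLevel_primitiveCharacter] at hsum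
  calc ‖∑ k ∈ Icc 1 h, χ k‖ ≤ ∑ d ∈ (n / m).divisors, √m * Real.log (2 * m) :=
        hsum ▸ norm_sum_le_of_le _ fun d _ ↦ hterm d
    _ = #(n / m).divisors * (√m * Real.log (2 * m)) := by rw [sum_const, nsmul_eq_mul]
    _ ≤ 2 * √n * Real.log n := card_divisors_div_mul_le χ.conductor_dvd_level hm (by omega)

/-- **Pólya–Vinogradov.** For any integer `n > 1`, any non-principal
Dirichlet character `χ` modulo `n` and any positive integer `h`,
`|∑_{k=1}^{h} χ(k)| ≤ 2 √n log n`. -/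
theorem polya_vinogradov (n : ℕ) (hn : 1 < n) (χ : DirichletCharacter ℂ n) (hχ : χ ≠ 1)
    (h : ℕ) (hh : 1 ≤ h) :
    ‖∑ k ∈ Finset.Icc 1 h, χ (k : ZMod n)‖ ≤
      2 * Real.sqrt n * Real.log n :=
  polya_vinogradov_general n hn χ hχ h
end

section
/- Let q ≥ 2, d ≥ 1, a coprime to q, and let G^{(d)} be the group of d-th power residues modulo q. Then for every ε > 0, Ψ_{μq^d}(aG^{(d)}) = r_d(q)·q^{d−1}·(μ + o(q^{−(1/2−ε)})) uniformly in μ ∈ (0, 1]; concretely, |Ψ_{μq^d}(aG^{(d)}) − μ·r_d(q)·q^{d−1}| ≤ r_d(q)·q^{d−1}·E(q) where E(q)·q^{1/2−ε} → 0 as q → ∞ along any sequence. -/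
/-!
Count `p ≤ X` residue class by residue class. A single class modulo `q` contains `X/q + O(1)`
integers up to `X`, so for `d ≥ 2` the `r_d(q)` classes of the coset `aG^{(d)}` contribute
`r_d(q) X/q + O(r_d(q))`, and with `X = μ q^d` the error is `O(1/q)` relative to the main term.

For `d = 1` the coset is the whole unit group and `X = μ q` is shorter than a period, so
the classes have to be counted together: Legendre's sieve gives `X φ(q)/q + O(2^{ω(q)})`
integers up to `X` coprime to `q`. Since `φ(q) ≥ q / 2^{ω(q)}`, the relative error is at most
`4^{ω(q)}/q`, and `4^{ω(q)} ≪ q^{1/2}` because `16^{ω(q)} ≤ 16^{16} q`: every prime factor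
`p ≥ 16` of `q` pays for its own factor `16`.
-/

open Filter

/-- `r_d(q)`: the number of distinct `d`-th powers in a reduced residue system modulo `q`. -/
noncomputable def rdPowers (d q : ℕ) : ℕ := Nat.card (Set.range (fun x : (ZMod q)ˣ => x ^ d))

open Finset

theorem natCard_subtype_eq_card_filter_Ioc_floor (P : ℕ → Prop) [DecidablePred P] {X : ℝ}
    (hX : 0 ≤ X) :
    Nat.card {p : ℕ // 1 ≤ p ∧ (p : ℝ) ≤ X ∧ P p} = #{p ∈ Ioc 0 ⌊X⌋₊ | P p} := by
  rw [← Nat.card_eq_finsetCard]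
  refine Nat.card_congr (Equiv.subtypeEquivRight fun p => ?_)
  simp only [mem_filter, mem_Ioc, Nat.le_floor_iff hX, Nat.one_le_iff_ne_zero,
    Nat.pos_iff_ne_zero, and_assoc]

theorem abs_card_filter_modEq_sub_le {q : ℕ} (hq : 0 < q) (v : ℕ) {B : ℝ} (hB : 0 ≤ B) :
    |(#{p ∈ Ioc 0 ⌊B⌋₊ | p ≡ v [MOD q]} : ℝ) - B / q| ≤ 2 := by
  set N := ⌊B⌋₊
  set x : ℚ := ((N : ℚ) - v) / q
  set y : ℚ := ((0 : ℕ) - (v : ℚ)) / q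
  have hcard : (#{p ∈ Ioc 0 N | p ≡ v [MOD q]} : ℝ) = max ((⌊x⌋ - ⌊y⌋ : ℤ) : ℝ) 0 := by
    rw [← Int.cast_natCast, Nat.Ioc_filter_modEq_card 0 N hq v, Int.cast_max, Int.cast_zero]
  have hxy : x - y = N / q := by simp only [x, y]; ring
  have hlo : (N : ℚ) / q - 1 < ⌊x⌋ - ⌊y⌋ := by
    linarith [Int.lt_floor_add_one x, Int.floor_le y]
  have hhi : ((⌊x⌋ - ⌊y⌋ : ℤ) : ℚ) < N / q + 1 := by
    push_cast; linarith [Int.floor_le x, Int.lt_floor_add_one y]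
  have hlo' := (Rat.cast_lt (K := ℝ)).mpr hlo
  have hhi' := (Rat.cast_lt (K := ℝ)).mpr hhi
  push_cast at hlo' hhi'
  have hq1 : (1 : ℝ) ≤ q := by exact_mod_cast hq
  have hNB : (N : ℝ) / q ≤ B / q := by gcongr; exact Nat.floor_le hB
  have hBN : B / q ≤ N / q + 1 := by
    rw [div_le_iff₀ (by positivity), add_mul, div_mul_cancel₀ _ (by positivity)]
    linarith [Nat.lt_floor_add_one B]
  rw [hcard, ← max_eq_left (by positivity : 0 ≤ B / q)]
  refine (abs_max_sub_max_le_abs _ _ _).trans ?_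
  rw [abs_le]; push_cast; constructor <;> linarith

theorem card_filter_natCast_mem_eq_sum {q : ℕ} [NeZero q] (S : Finset (ZMod q)) (s : Finset ℕ) :
    #{p ∈ s | ((p : ℕ) : ZMod q) ∈ S} = ∑ c ∈ S, #{p ∈ s | p ≡ c.val [MOD q]} := by
  rw [card_eq_sum_card_fiberwise (f := (Nat.cast : ℕ → ZMod q)) (t := S)
    (s := {p ∈ s | ((p : ℕ) : ZMod q) ∈ S}) fun p hp => (mem_filter.mp hp).2]
  refine sum_congr rfl fun c hc => congrArg card ?_
  rw [filter_filter]
  refine filter_congr fun p _ => ?_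
  rw [← ZMod.natCast_eq_natCast_iff, ZMod.natCast_zmod_val]
  exact ⟨And.right, fun h => ⟨h ▸ hc, h⟩⟩

theorem abs_card_filter_mem_sub_le {q : ℕ} [NeZero q] (S : Finset (ZMod q)) {B : ℝ}
    (hB : 0 ≤ B) :
    |(#{p ∈ Ioc 0 ⌊B⌋₊ | ((p : ℕ) : ZMod q) ∈ S} : ℝ) - #S * (B / q)| ≤ 2 * #S := by
  rw [card_filter_natCast_mem_eq_sum, Nat.cast_sum, ← nsmul_eq_mul, ← sum_const,
    ← sum_sub_distrib]
  calc _ ≤ ∑ c ∈ S, |(#{p ∈ Ioc 0 ⌊B⌋₊ | p ≡ c.val [MOD q]} : ℝ) - B / q| :=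
        abs_sum_le_sum_abs _ _
    _ ≤ ∑ _c ∈ S, (2 : ℝ) :=
        sum_le_sum fun c _ => abs_card_filter_modEq_sub_le (Nat.pos_of_neZero q) c.val hB
    _ = 2 * #S := by rw [sum_const, nsmul_eq_mul, mul_comm]

section Legendre

open ArithmeticFunction
open scoped ArithmeticFunction.Moebius

theorem Nat.card_filter_coprime_eq_sum_moebius {q : ℕ} (hq : q ≠ 0) (N : ℕ) :
    (#{p ∈ Ioc 0 N | p.Coprime q} : ℤ) = ∑ e ∈ q.divisors, μ e * (N / e : ℕ) := by
  have hindicator : ∀ p : ℕ,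
      (if p.Coprime q then (1 : ℤ) else 0) = ∑ e ∈ q.divisors with e ∣ p, μ e := by
    intro p
    have hdiv : {e ∈ q.divisors | e ∣ p} = (p.gcd q).divisors := by
      ext e
      simp only [mem_filter, Nat.mem_divisors, Nat.dvd_gcd_iff, ne_eq, Nat.gcd_eq_zero_iff, hq,
        and_false, not_false_eq_true, and_true]
      tauto
    rw [hdiv, ← coe_mul_zeta_apply, moebius_mul_coe_zeta, one_apply]
  rw [card_filter, Nat.cast_sum, sum_congr rfl fun p _ => by exact_mod_cast hindicator p,
    sum_comm' (t' := q.divisors) (s' := fun e => {p ∈ Ioc 0 N | e ∣ p})]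
  · refine sum_congr rfl fun e _ => ?_
    rw [sum_const, Nat.Ioc_filter_dvd_card_eq_div, nsmul_eq_mul, mul_comm]
  · intro p e
    simp only [mem_filter]
    tauto

theorem Nat.totient_eq_sum_moebius {q : ℕ} (hq : q ≠ 0) :
    (q.totient : ℤ) = ∑ e ∈ q.divisors, μ e * (q / e : ℕ) := by
  rw [← Nat.card_filter_coprime_eq_sum_moebius hq, ← Nat.filter_coprime_Ico_eq_totient q 1]
  congr 2
  ext p
  simp only [mem_filter, mem_Ioc, mem_Ico, Nat.coprime_comm]
  omega

theorem Nat.card_divisors_filter_squarefree {n : ℕ} (hn : n ≠ 0) :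
    #{d ∈ n.divisors | Squarefree d} = 2 ^ #n.primeFactors := by
  rw [card_eq_sum_ones, Nat.sum_divisors_filter_squarefree hn, sum_const, smul_eq_mul, mul_one,
    card_powerset, Nat.factors_eq]
  rfl

theorem Nat.abs_card_filter_coprime_sub_le {q : ℕ} (hq : q ≠ 0) {x : ℝ} (hx : 0 ≤ x) :
    |(#{p ∈ Ioc 0 ⌊x⌋₊ | p.Coprime q} : ℝ) - x * q.totient / q| ≤ 2 ^ #q.primeFactors := by
  have hcount : (#{p ∈ Ioc 0 ⌊x⌋₊ | p.Coprime q} : ℝ) =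
      ∑ e ∈ q.divisors, (μ e : ℝ) * ⌊x / e⌋₊ := by
    rw [← Int.cast_natCast, Nat.card_filter_coprime_eq_sum_moebius hq]
    simp only [Int.cast_sum, Int.cast_mul, Int.cast_natCast, Nat.floor_div_natCast]
  have hmain : x * q.totient / q = ∑ e ∈ q.divisors, (μ e : ℝ) * (x / e) := by
    rw [← Int.cast_natCast q.totient, Nat.totient_eq_sum_moebius hq]
    simp only [Int.cast_sum, Int.cast_mul, Int.cast_natCast, mul_sum, sum_div]
    refine sum_congr rfl fun e he => ?_
    rw [Nat.cast_div (Nat.dvd_of_mem_divisors he)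
      (Nat.cast_ne_zero.mpr (Nat.pos_of_mem_divisors he).ne')]
    field_simp
  have hterm : ∀ e : ℕ,
      |(μ e : ℝ) * ⌊x / e⌋₊ - μ e * (x / e)| ≤ if Squarefree e then 1 else 0 := by
    intro e
    have hfloor : |(⌊x / e⌋₊ : ℝ) - x / e| ≤ 1 := by
      rw [abs_sub_comm, abs_le]
      constructor <;>
        linarith [Nat.floor_le (by positivity : 0 ≤ x / e), Nat.lt_floor_add_one (x / e)]
    calc |(μ e : ℝ) * ⌊x / e⌋₊ - μ e * (x / e)| = |(μ e : ℝ)| * |(⌊x / e⌋₊ : ℝ) - x / e| := by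
          rw [← mul_sub, abs_mul]
      _ ≤ |(μ e : ℝ)| := mul_le_of_le_one_right (abs_nonneg _) hfloor
      _ = if Squarefree e then 1 else 0 := by
          rw [← Int.cast_abs, abs_moebius]; split_ifs <;> simp
  rw [hcount, hmain, ← sum_sub_distrib]
  calc _ ≤ ∑ e ∈ q.divisors, if Squarefree e then (1 : ℝ) else 0 :=
        (abs_sum_le_sum_abs _ _).trans (sum_le_sum fun e _ => hterm e)
    _ = 2 ^ #q.primeFactors := by
        rw [sum_boole, Nat.card_divisors_filter_squarefree hq]; push_cast; rfl

end Legendre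

theorem Nat.le_totient_mul_two_pow_card_primeFactors (n : ℕ) :
    n ≤ n.totient * 2 ^ #n.primeFactors := by
  have hprod : ∏ p ∈ n.primeFactors, p ≤ 2 ^ #n.primeFactors * ∏ p ∈ n.primeFactors, (p - 1) := by
    rw [← prod_const, ← prod_mul_distrib]
    refine prod_le_prod' fun p hp => ?_
    have := (Nat.prime_of_mem_primeFactors hp).two_le
    omega
  have hpos : 0 < ∏ p ∈ n.primeFactors, (p - 1) :=
    prod_pos fun p hp => Nat.sub_pos_of_lt (Nat.prime_of_mem_primeFactors hp).one_lt
  refine le_of_mul_le_mul_right ?_ hpos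
  calc n * ∏ p ∈ n.primeFactors, (p - 1) = n.totient * ∏ p ∈ n.primeFactors, p :=
        (Nat.totient_mul_prod_primeFactors n).symm
    _ ≤ n.totient * (2 ^ #n.primeFactors * ∏ p ∈ n.primeFactors, (p - 1)) := by gcongr
    _ = _ := by ring

theorem Nat.pow_card_primeFactors_le (M : ℕ) {n : ℕ} (hn : n ≠ 0) :
    M ^ #n.primeFactors ≤ M ^ M * n := by
  rcases M.eq_zero_or_pos with rfl | hM
  · rcases (#n.primeFactors).eq_zero_or_pos with h | h <;>
      simp [h, Nat.one_le_iff_ne_zero, hn]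
  rw [← card_filter_add_card_filter_not (fun p => p < M), pow_add]
  gcongr ?_ * ?_
  · refine pow_le_pow_right₀ hM ((card_le_card fun p hp => ?_).trans_eq (card_range M))
    exact mem_range.mpr (mem_filter.mp hp).2
  · calc M ^ #{p ∈ n.primeFactors | ¬p < M}
        ≤ ∏ p ∈ n.primeFactors with ¬p < M, p :=
          pow_card_le_prod _ _ _ fun p hp => not_lt.mp (mem_filter.mp hp).2
      _ ≤ ∏ p ∈ n.primeFactors, p := prod_le_prod_of_subset_of_one_le' (filter_subset _ _)
          fun p hp _ => (Nat.prime_of_mem_primeFactors hp).one_lt.le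
      _ ≤ n := Nat.le_of_dvd (Nat.pos_of_ne_zero hn) (Nat.prod_primeFactors_dvd n)

theorem Nat.four_pow_card_primeFactors_le {n : ℕ} (hn : n ≠ 0) :
    (4 : ℝ) ^ #n.primeFactors ≤ 4 ^ 16 * √n := by
  have h : ((4 : ℝ) ^ #n.primeFactors) ^ 2 ≤ (4 ^ 16) ^ 2 * n := by
    calc ((4 : ℝ) ^ #n.primeFactors) ^ 2 = 16 ^ #n.primeFactors := by
          rw [← pow_mul, mul_comm, pow_mul]; norm_num
      _ ≤ 16 ^ 16 * n := by exact_mod_cast Nat.pow_card_primeFactors_le 16 hn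
      _ = (4 ^ 16) ^ 2 * n := by norm_num
  rw [← Real.sqrt_sq (by positivity : (0 : ℝ) ≤ 4 ^ #n.primeFactors),
    ← Real.sqrt_sq (by positivity : (0 : ℝ) ≤ 4 ^ 16), ← Real.sqrt_mul (by positivity)]
  exact Real.sqrt_le_sqrt h

/-- `Ψ_X(aG^{(d)})` in the paper's notation. -/
noncomputable def cosetCount (q d : ℕ) (a : (ZMod q)ˣ) (X : ℝ) : ℕ :=
  Nat.card {p : ℕ // 1 ≤ p ∧ (p : ℝ) ≤ X ∧
    ∃ x : (ZMod q)ˣ, (p : ZMod q) = ((a * x ^ d : (ZMod q)ˣ) : ZMod q)}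

/-- The witness for `E`; it absorbs both error bounds: `2 r_d(q) ≤ r_d(q) q^{d-1} E(q)` for `d ≥ 2`
and `2^{ω(q)} ≤ φ(q) E(q)` for `d = 1`. -/
noncomputable def cosetCountError (q : ℕ) : ℝ := 2 * 4 ^ #q.primeFactors / q

theorem tendsto_cosetCountError_mul_rpow {ε : ℝ} (hε : 0 < ε) :
    Tendsto (fun q : ℕ => cosetCountError q * (q : ℝ) ^ ((1 : ℝ) / 2 - ε)) atTop (nhds 0) := by
  have hlim : Tendsto (fun q : ℕ => 2 * 4 ^ 16 * (q : ℝ) ^ (-ε)) atTop (nhds 0) := by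
    simpa using ((tendsto_rpow_neg_atTop hε).comp tendsto_natCast_atTop_atTop).const_mul
      (2 * 4 ^ 16 : ℝ)
  refine squeeze_zero' (Eventually.of_forall fun q => by unfold cosetCountError; positivity)
    ?_ hlim
  filter_upwards [eventually_ne_atTop 0] with q hq
  have hq' : (0 : ℝ) < q := by positivity
  have hsplit : (q : ℝ) ^ ((1 : ℝ) / 2 - ε) = √q * q ^ (-ε) := by
    rw [sub_eq_add_neg, Real.rpow_add hq', ← Real.sqrt_eq_rpow]
  calc cosetCountError q * (q : ℝ) ^ ((1 : ℝ) / 2 - ε)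
      ≤ 2 * (4 ^ 16 * √q) / q * (√q * q ^ (-ε)) := by
        rw [cosetCountError, hsplit]; gcongr; exact Nat.four_pow_card_primeFactors_le hq
    _ = 2 * 4 ^ 16 * (q : ℝ) ^ (-ε) := by
        field_simp
        rw [Real.sq_sqrt hq'.le]

section Coset

variable {q : ℕ}

theorem card_image_coe_mul_pow [NeZero q] (d : ℕ) (a : (ZMod q)ˣ) :
    #(univ.image fun x : (ZMod q)ˣ => ((a * x ^ d : (ZMod q)ˣ) : ZMod q)) = rdPowers d q := by
  have hcomp : (fun x : (ZMod q)ˣ => ((a * x ^ d : (ZMod q)ˣ) : ZMod q)) =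
      Units.val ∘ (a * ·) ∘ (· ^ d) := rfl
  rw [hcomp, ← image_image, ← image_image, card_image_of_injective _ Units.val_injective,
    card_image_of_injective _ (mul_right_injective a), rdPowers, Nat.card_eq_card_toFinset,
    Set.toFinset_range]

theorem rdPowers_one [NeZero q] : rdPowers 1 q = q.totient := by
  simp [rdPowers, ZMod.card_units_eq_totient]

theorem abs_cosetCount_sub_le [NeZero q] (d : ℕ) (a : (ZMod q)ˣ) {X : ℝ} (hX : 0 ≤ X) :
    |(cosetCount q d a X : ℝ) - rdPowers d q * (X / q)| ≤ 2 * rdPowers d q := by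
  classical
  have hcount : cosetCount q d a X = #{p ∈ Ioc 0 ⌊X⌋₊ |
      ((p : ℕ) : ZMod q) ∈ univ.image fun x : (ZMod q)ˣ => ((a * x ^ d : (ZMod q)ˣ) : ZMod q)} := by
    rw [cosetCount, ← natCard_subtype_eq_card_filter_Ioc_floor _ hX]
    simp only [mem_image, mem_univ, true_and, eq_comm]
  rw [hcount, ← card_image_coe_mul_pow d a]
  exact abs_card_filter_mem_sub_le _ hX

theorem cosetCount_one (a : (ZMod q)ˣ) {X : ℝ} (hX : 0 ≤ X) :
    cosetCount q 1 a X = #{p ∈ Ioc 0 ⌊X⌋₊ | p.Coprime q} := by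
  have hunit : ∀ p : ℕ,
      (∃ x : (ZMod q)ˣ, (p : ZMod q) = ((a * x ^ 1 : (ZMod q)ˣ) : ZMod q)) ↔ p.Coprime q := by
    intro p
    rw [← ZMod.isUnit_iff_coprime]
    constructor
    · rintro ⟨x, hx⟩
      exact hx ▸ (a * x ^ 1).isUnit
    · rintro ⟨u, hu⟩
      exact ⟨a⁻¹ * u, by rw [pow_one, mul_inv_cancel_left, hu]⟩
  simp_rw [cosetCount, hunit]
  exact natCard_subtype_eq_card_filter_Ioc_floor _ hX

theorem abs_cosetCount_one_sub_le [NeZero q] (a : (ZMod q)ˣ) {X : ℝ} (hX : 0 ≤ X) :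
    |(cosetCount q 1 a X : ℝ) - X * q.totient / q| ≤ 2 ^ #q.primeFactors := by
  rw [cosetCount_one a hX]
  exact Nat.abs_card_filter_coprime_sub_le (NeZero.ne q) hX

theorem abs_cosetCount_one_sub_le_cosetCountError [NeZero q] (a : (ZMod q)ˣ) {μ : ℝ}
    (hμ : 0 ≤ μ) :
    |(cosetCount q 1 a (μ * (q : ℝ) ^ 1) : ℝ) - μ * rdPowers 1 q * (q : ℝ) ^ (1 - 1)|
      ≤ rdPowers 1 q * (q : ℝ) ^ (1 - 1) * cosetCountError q := by
  have hq : (0 : ℝ) < q := Nat.cast_pos.mpr (Nat.pos_of_neZero q)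
  have htot : (q : ℝ) ≤ q.totient * 2 ^ #q.primeFactors := by
    exact_mod_cast Nat.le_totient_mul_two_pow_card_primeFactors q
  have hfour : (4 : ℝ) ^ #q.primeFactors = 2 ^ #q.primeFactors * 2 ^ #q.primeFactors := by
    rw [← mul_pow]; norm_num
  rw [rdPowers_one, Nat.sub_self, pow_zero, mul_one, mul_one]
  calc |(cosetCount q 1 a (μ * (q : ℝ) ^ 1) : ℝ) - μ * q.totient|
      = |(cosetCount q 1 a (μ * (q : ℝ) ^ 1) : ℝ) - μ * q ^ 1 * q.totient / q| := by
        rw [pow_one]; field_simp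
    _ ≤ 2 ^ #q.primeFactors := abs_cosetCount_one_sub_le a (by positivity)
    _ ≤ q.totient * cosetCountError q := by
        rw [cosetCountError, ← mul_div_assoc, le_div_iff₀ hq]
        calc 2 ^ #q.primeFactors * (q : ℝ)
            ≤ 2 ^ #q.primeFactors * (q.totient * 2 ^ #q.primeFactors) := by gcongr
          _ = q.totient * 4 ^ #q.primeFactors := by rw [hfour]; ring
          _ ≤ q.totient * (2 * 4 ^ #q.primeFactors) := by
              gcongr; linarith [pow_pos (by norm_num : (0 : ℝ) < 4) #q.primeFactors]

theorem abs_cosetCount_sub_le_cosetCountError_of_two_le [NeZero q] {d : ℕ} (hd : 2 ≤ d)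
    (a : (ZMod q)ˣ) {μ : ℝ} (hμ : 0 ≤ μ) :
    |(cosetCount q d a (μ * (q : ℝ) ^ d) : ℝ) - μ * rdPowers d q * (q : ℝ) ^ (d - 1)|
      ≤ rdPowers d q * (q : ℝ) ^ (d - 1) * cosetCountError q := by
  obtain ⟨k, rfl⟩ : ∃ k, d = k + 2 := ⟨d - 2, by omega⟩
  have hq : (1 : ℝ) ≤ q := Nat.one_le_cast.mpr (Nat.pos_of_neZero q)
  rw [Nat.add_sub_assoc (by norm_num), cosetCountError]
  calc |(cosetCount q (k + 2) a (μ * (q : ℝ) ^ (k + 2)) : ℝ)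
          - μ * rdPowers (k + 2) q * (q : ℝ) ^ (k + 1)|
      = |(cosetCount q (k + 2) a (μ * (q : ℝ) ^ (k + 2)) : ℝ)
          - rdPowers (k + 2) q * (μ * (q : ℝ) ^ (k + 2) / q)| := by
        rw [pow_succ (q : ℝ) (k + 1)]; field_simp
    _ ≤ 2 * rdPowers (k + 2) q := abs_cosetCount_sub_le _ a (by positivity)
    _ ≤ 2 * rdPowers (k + 2) q * ((q : ℝ) ^ k * 4 ^ #q.primeFactors) :=
        le_mul_of_one_le_right (by positivity)
          (one_le_mul_of_one_le_of_one_le (one_le_pow₀ hq) (one_le_pow₀ (by norm_num)))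
    _ = rdPowers (k + 2) q * (q : ℝ) ^ (k + 1) * (2 * 4 ^ #q.primeFactors / q) := by
        rw [pow_succ]; field_simp

theorem abs_cosetCount_sub_le_cosetCountError [NeZero q] {d : ℕ} (hd : 1 ≤ d)
    (a : (ZMod q)ˣ) {μ : ℝ} (hμ : 0 ≤ μ) :
    |(cosetCount q d a (μ * (q : ℝ) ^ d) : ℝ) - μ * rdPowers d q * (q : ℝ) ^ (d - 1)|
      ≤ rdPowers d q * (q : ℝ) ^ (d - 1) * cosetCountError q := by
  rcases hd.eq_or_lt with rfl | hd
  · exact abs_cosetCount_one_sub_le_cosetCountError a hμ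
  · exact abs_cosetCount_sub_le_cosetCountError_of_two_le hd a hμ

end Coset

/-- For fixed `d ≥ 1` and every `ε > 0` there is an error function `E`
with `E(q)·q^{1/2−ε} → 0` such that, uniformly in the unit `a` and in `μ ∈ (0,1]`,
`|Ψ_{μq^d}(aG^{(d)}) − μ·r_d(q)·q^{d−1}| ≤ r_d(q)·q^{d−1}·E(q)`. -/
theorem coset_count_asymptotic (d : ℕ) (hd : 1 ≤ d) (ε : ℝ) (hε : 0 < ε) :
    ∃ E : ℕ → ℝ,
      Tendsto (fun q : ℕ => E q * (q : ℝ) ^ ((1 : ℝ) / 2 - ε)) atTop (nhds 0) ∧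
      ∀ q : ℕ, 2 ≤ q → ∀ a : (ZMod q)ˣ, ∀ μ : ℝ, 0 < μ → μ ≤ 1 →
        |(Nat.card {p : ℕ // 1 ≤ p ∧ (p : ℝ) ≤ μ * (q : ℝ) ^ d ∧
            ∃ x : (ZMod q)ˣ, (p : ZMod q) = ((a * x ^ d : (ZMod q)ˣ) : ZMod q)} : ℝ)
          - μ * (rdPowers d q : ℝ) * (q : ℝ) ^ (d - 1)|
          ≤ (rdPowers d q : ℝ) * (q : ℝ) ^ (d - 1) * E q := by
  refine ⟨cosetCountError, tendsto_cosetCountError_mul_rpow hε, fun q hq a μ hμ _ => ?_⟩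
  have : NeZero q := ⟨by omega⟩
  exact abs_cosetCount_sub_le_cosetCountError hd a hμ.le
end
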